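/- Fix q ∈ ℝ with q ≠ 0 and z₀ ∈ ℂ, and let H(z) := (q/(4π√2)) · (1 + z₀·conj z)/(z − z₀) for z ≠ z₀. Then the function z ↦ |H(z)|² · 4(1+|z|²)^{-2} is NOT Lebesgue-integrable on ℂ. (This is the paper's collinear-divergence claim for massless QED: the electromagnetic memory forced by charge conservation is not square-integrable on the 2-sphere, so the corresponding out-state would have infinite energy.) -/

import Mathlib

/-!
At `z = z₀` the numerator satisfies `|1 + z₀ z̄₀| = 1 + |z₀|²`, which exactly cancels the
sphere density, so near `z₀` the integrand is `≈ 4 (q/(4π√2))² / |z - z₀|²`. An inverse-square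
singularity is not integrable in two real dimensions: in polar coordinates it becomes `∫ dr / r`.
-/

noncomputable section

/-- The paper's electromagnetic memory Green's function (4.19):
`H(z) = (q/(4π√2)) (1 + z₀ z̄)/(z − z₀)`. -/
def memH (q : ℝ) (z₀ z : ℂ) : ℂ :=
  ((q / (4 * Real.pi * Real.sqrt 2) : ℝ) : ℂ) *
    (1 + z₀ * (starRingEnd ℂ) z) / (z - z₀)

open MeasureTheory Metric Module Filter Topology Set ComplexConjugate

section

variable {E F : Type*} [NormedAddCommGroup E] [NormedSpace ℝ E] [FiniteDimensional ℝ E]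
  [Nontrivial E] [MeasurableSpace E] [BorelSpace E] [NormedAddCommGroup F]
  (μ : Measure E) [μ.IsAddHaarMeasure]

theorem not_integrableOn_ball_norm_rpow_neg_finrank {r : ℝ} (hr : 0 < r) :
    ¬ IntegrableOn (fun x : E => ‖x‖ ^ (-(finrank ℝ E : ℝ))) (ball 0 r) μ := by
  rw [integrableOn_fun_norm_addHaar μ (f := fun y => y ^ (-(finrank ℝ E : ℝ)))]
  intro h
  have hinv : IntegrableOn (fun y : ℝ => y ^ (-1 : ℝ)) (Ioo 0 r) := by
    refine h.congr_fun (fun y hy => ?_) measurableSet_Ioo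
    have hd : 1 ≤ finrank ℝ E := finrank_pos
    dsimp only
    rw [smul_eq_mul, ← Real.rpow_natCast, ← Real.rpow_add hy.1, Nat.cast_sub hd]
    ring_nf
  simp [intervalIntegral.integrableOn_Ioo_rpow_iff hr] at hinv

theorem not_integrable_of_eventually_rpow_neg_finrank_le_norm {f : E → F} {x₀ : E} {c : ℝ}
    (hc : 0 < c) (h : ∀ᶠ x in 𝓝 x₀, c * ‖x - x₀‖ ^ (-(finrank ℝ E : ℝ)) ≤ ‖f x‖) :
    ¬ Integrable f μ := by
  intro hf
  have h₀ : ∀ᶠ x in 𝓝 0, c * ‖x‖ ^ (-(finrank ℝ E : ℝ)) ≤ ‖f (x + x₀)‖ := by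
    have := ((continuous_add_const x₀).tendsto' 0 x₀ (zero_add x₀)).eventually h
    simpa only [add_sub_cancel_right] using this
  obtain ⟨r, hr, hball⟩ := Metric.eventually_nhds_iff_ball.1 h₀
  have hmin : IntegrableOn (fun x : E => c * ‖x‖ ^ (-(finrank ℝ E : ℝ))) (ball 0 r) μ := by
    refine Integrable.mono' (hf.comp_add_right x₀).integrableOn.norm
      ((measurable_norm.pow_const _).const_mul c).aestronglyMeasurable ?_
    filter_upwards [ae_restrict_mem measurableSet_ball] with x hx
    rw [Real.norm_of_nonneg (by positivity)]
    exact hball x hx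
  exact not_integrableOn_ball_norm_rpow_neg_finrank μ hr
    ((integrable_const_mul_iff (isUnit_iff_ne_zero.2 hc.ne') _).1 hmin)

end

theorem norm_memH_sq (q : ℝ) (z₀ z : ℂ) :
    ‖memH q z₀ z‖ ^ 2 =
      (q / (4 * Real.pi * Real.sqrt 2)) ^ 2 * ‖1 + z₀ * conj z‖ ^ 2 * ‖z - z₀‖ ^ (-2 : ℝ) := by
  rw [memH, norm_div, norm_mul, Complex.norm_real, Real.norm_eq_abs, div_pow, mul_pow, sq_abs,
    Real.rpow_neg (norm_nonneg _), Real.rpow_two, div_eq_mul_inv]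

theorem norm_one_add_mul_conj_self (z : ℂ) : ‖1 + z * conj z‖ = 1 + ‖z‖ ^ 2 := by
  rw [Complex.mul_conj, Complex.normSq_eq_norm_sq, ← Complex.ofReal_one, ← Complex.ofReal_add,
    Complex.norm_real, Real.norm_of_nonneg (by positivity)]

theorem tendsto_norm_one_add_mul_conj_sq_mul_density (z₀ : ℂ) :
    Tendsto (fun z : ℂ => ‖1 + z₀ * conj z‖ ^ 2 * (4 * ((1 + ‖z‖ ^ 2) ^ 2)⁻¹)) (𝓝 z₀) (𝓝 4) := by
  have hpos : (1 + ‖z₀‖ ^ 2) ^ 2 ≠ 0 := by positivity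
  have hcont : ContinuousAt
      (fun z : ℂ => ‖1 + z₀ * conj z‖ ^ 2 * (4 * ((1 + ‖z‖ ^ 2) ^ 2)⁻¹)) z₀ := by
    fun_prop (disch := exact hpos)
  convert hcont.tendsto using 2
  rw [norm_one_add_mul_conj_self]
  field_simp

/-- **Collinear divergence in massless QED**: the electromagnetic memory forced
by charge conservation is not square-integrable on the 2-sphere — the function
`z ↦ |H(z)|² · 4(1+|z|²)⁻²` is not Lebesgue-integrable on `ℂ` (where
`4(1+|z|²)⁻²` is the density of the round sphere measure in stereographic
coordinates) — so the corresponding out-state would have infinite energy. -/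
theorem memH_not_square_integrable (q : ℝ) (hq : q ≠ 0) (z₀ : ℂ) :
    ¬ MeasureTheory.Integrable
        (fun z : ℂ => ‖memH q z₀ z‖ ^ 2 * (4 * ((1 + ‖z‖ ^ 2) ^ 2)⁻¹)) := by
  set C := q / (4 * Real.pi * Real.sqrt 2)
  have hC : 0 < C ^ 2 := by
    have : C ≠ 0 := div_ne_zero hq (by positivity)
    positivity
  have hnear : ∀ᶠ z in 𝓝 z₀, 2 < ‖1 + z₀ * conj z‖ ^ 2 * (4 * ((1 + ‖z‖ ^ 2) ^ 2)⁻¹) :=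
    (tendsto_norm_one_add_mul_conj_sq_mul_density z₀).eventually_const_lt (by norm_num)
  refine not_integrable_of_eventually_rpow_neg_finrank_le_norm volume (x₀ := z₀)
    (mul_pos two_pos hC) ?_
  filter_upwards [hnear] with z hz
  rw [Complex.finrank_real_complex, Real.norm_of_nonneg (by positivity), norm_memH_sq]
  push_cast
  calc 2 * C ^ 2 * ‖z - z₀‖ ^ (-2 : ℝ)
      ≤ C ^ 2 * (‖1 + z₀ * conj z‖ ^ 2 * (4 * ((1 + ‖z‖ ^ 2) ^ 2)⁻¹)) * ‖z - z₀‖ ^ (-2 : ℝ) := by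
        rw [mul_comm 2]; gcongr
    _ = _ := by ring

end
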